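/- Let w be a permutation of {1,…,n} and let i, j ∈ {1,…,n} with i ≥ j. Then in ℚ[t] one has f_{i,j}(w) = Σ_{k=j}^{i} (−1)^{i−k} · e_{i−k}(w(j+1),…,w(i)) · t^{i−k} · b_{k,j}((w(1)−1)t, (w(2)−1)t, …, (w(j)−1)t, t), where e_m denotes the m-th elementary symmetric polynomial in the listed rational numbers (with e_0 = 1) and b_{k,j}((w(1)−1)t,…,(w(j)−1)t,t) is the result of substituting u_r = (w(r)−1)t for 1 ≤ r ≤ j into b_{k,j}. -/

import Mathlib

/-- The variable `x_k` (for `1 ≤ k ≤ n`) in `ℚ[x_1,…,x_n,t]`, realized as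
`MvPolynomial (Fin (n+1)) ℚ` where the variable of index `0` is `t`. -/
noncomputable def xv (n k : ℕ) : MvPolynomial (Fin (n + 1)) ℚ :=
  if h : k ≤ n then MvPolynomial.X ⟨k, Nat.lt_succ_of_le h⟩ else 0

/-- The variable `t` in `ℚ[x_1,…,x_n,t]` (also playing the role of `t` in `ℚ[u_1,…,u_n,t]`). -/
noncomputable def tv (n : ℕ) : MvPolynomial (Fin (n + 1)) ℚ :=
  MvPolynomial.X 0

/-- `p_i := Σ_{k=1}^{i} (x_k − k·t)`, with `p_0 = 0`. -/
noncomputable def pp (n i : ℕ) : MvPolynomial (Fin (n + 1)) ℚ :=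
  ∑ k ∈ Finset.Icc 1 i, (xv n k - (k : MvPolynomial (Fin (n + 1)) ℚ) * tv n)

/-- The polynomials `f_{i,j}`: `f_{j,j} = p_j`, `f_{i,0} = 0`, and
`f_{i,j} = f_{i−1,j−1} + (x_j − x_i − t)·f_{i−1,j}` for `i > j ≥ 1`. -/
noncomputable def ff (n : ℕ) : ℕ → ℕ → MvPolynomial (Fin (n + 1)) ℚ
  | _, 0 => 0
  | 0, _ + 1 => 0
  | i + 1, j + 1 =>
    if i + 1 = j + 1 then pp n (j + 1)
    else ff n i j + (xv n (j + 1) - xv n (i + 1) - tv n) * ff n i (j + 1)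

/-- The `ℚ`-algebra homomorphism `ℚ[x_1,…,x_n,t] → ℚ[t]` sending `x_r ↦ w(r)·t` and
`t ↦ t`; applied to `f_{i,j}` it yields `f_{i,j}(w)`. -/
noncomputable def evf (n : ℕ) (w : ℕ → ℕ) : MvPolynomial (Fin (n + 1)) ℚ →ₐ[ℚ] Polynomial ℚ :=
  MvPolynomial.aeval fun v : Fin (n + 1) =>
    if (v : ℕ) = 0 then Polynomial.X else Polynomial.C ((w (v : ℕ) : ℚ)) * Polynomial.X

/-- `b_{j,j} := Σ_{k=1}^{j} (u_k − (k−1)·t)`, in `ℚ[u_1,…,u_n,t]`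
(realized as `MvPolynomial (Fin (n+1)) ℚ` with `u_k` the variable of index `k` and `t`
the variable of index `0`). -/
noncomputable def bbase (n j : ℕ) : MvPolynomial (Fin (n + 1)) ℚ :=
  ∑ r ∈ Finset.Icc 1 j, (xv n r - ((r : MvPolynomial (Fin (n + 1)) ℚ) - 1) * tv n)

/-- The polynomials `b_{k,j}`: `b_{j,j}` as above, `b_{k,0} = 0`, and
`b_{k+1,j} = b_{k,j−1} + u_j·b_{k,j} − (u_j + t)·b_{k−1,j−1}` for `k ≥ j`. -/
noncomputable def bb (n : ℕ) : ℕ → ℕ → MvPolynomial (Fin (n + 1)) ℚ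
  | _, 0 => 0
  | 0, _ + 1 => 0
  | 1, j + 1 => if 1 = j + 1 then bbase n (j + 1) else 0
  | k + 2, j + 1 =>
    if k + 2 = j + 1 then bbase n (j + 1)
    else if k + 2 < j + 1 then 0
    else bb n (k + 1) j + xv n (j + 1) * bb n (k + 1) (j + 1)
      - (xv n (j + 1) + tv n) * bb n k j

/-- The `ℚ`-algebra homomorphism `ℚ[u_1,…,u_n,t] → ℚ[t]` substituting
`u_r ↦ (w(r)−1)·t` and `t ↦ t`. -/
noncomputable def evb (n : ℕ) (w : ℕ → ℕ) : MvPolynomial (Fin (n + 1)) ℚ →ₐ[ℚ] Polynomial ℚ :=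
  MvPolynomial.aeval fun v : Fin (n + 1) =>
    if (v : ℕ) = 0 then Polynomial.X else Polynomial.C ((w (v : ℕ) : ℚ) - 1) * Polynomial.X

/-- The `m`-th elementary symmetric polynomial of the rational numbers `w(q)`, `q ∈ s`
(with `e_0 = 1`). -/
def esym (s : Finset ℕ) (w : ℕ → ℕ) (m : ℕ) : ℚ :=
  ∑ T ∈ Finset.powersetCard m s, ∏ q ∈ T, (w q : ℚ)


/-!
Both sides are coefficients of generating functions in an auxiliary variable `z` over `ℚ[t]`:
the right-hand side is the coefficient of `z^i` in `E_{(j,i]}(z) · B_j(z)`, where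
`E_s(z) = ∏_{q ∈ s} (1 - w(q) t z)` and `B_j(z) = Σ_k b_{k,j}(w) z^k`.
It therefore suffices to check that these coefficients obey the recursion defining `f_{i,j}(w)`.
Splitting off the factors of `q = j+1` and `q = i+1` reduces that recursion to the vanishing of the
coefficient of `z^{i+1}` in `E_{(j+1,i]}(z) · G(z)`, where
`G = (1 - (w(j+1)-1) t z) B_{j+1} - z (1 - w(j+1) t z) B_j`. The recursion of `b` says exactly that
`G` has degree at most `j+1`, while `E_{(j+1,i]}` has degree `i-j-1`.
-/

open Finset Polynomial

lemma esym_zero (s : Finset ℕ) (w : ℕ → ℕ) : esym s w 0 = 1 := by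
  simp [esym]

lemma esym_eq_zero_of_card_lt {s : Finset ℕ} {m : ℕ} (w : ℕ → ℕ) (h : #s < m) :
    esym s w m = 0 := by
  simp [esym, powersetCard_eq_empty.2 h]

lemma esym_insert {a : ℕ} {s : Finset ℕ} (ha : a ∉ s) (w : ℕ → ℕ) (m : ℕ) :
    esym (insert a s) w (m + 1) = esym s w (m + 1) + (w a : ℚ) * esym s w m := by
  have not_mem {T : Finset ℕ} (hT : T ∈ powersetCard m s) : a ∉ T :=
    fun h => ha ((mem_powersetCard.1 hT).1 h)
  rw [esym, powersetCard_succ_insert ha, sum_union, sum_image, esym, esym, mul_sum]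
  · exact congrArg _ (sum_congr rfl fun T hT => prod_insert (not_mem hT))
  · intro T hT T' hT' h
    rw [← erase_insert (not_mem hT), ← erase_insert (not_mem hT'), h]
  · refine disjoint_right.2 fun T hT hTs => ?_
    obtain ⟨T', -, rfl⟩ := mem_image.1 hT
    exact ha ((mem_powersetCard.1 hTs).1 (mem_insert_self a T'))

section Evaluation

variable {n : ℕ} (w : ℕ → ℕ)

@[simp] lemma evf_tv : evf n w (tv n) = X := by
  simp [evf, tv]

@[simp] lemma evb_tv : evb n w (tv n) = X := by
  simp [evb, tv]

lemma evf_xv {k : ℕ} (hk : 1 ≤ k) (hkn : k ≤ n) : evf n w (xv n k) = C (w k : ℚ) * X := by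
  rw [xv, dif_pos hkn, evf, MvPolynomial.aeval_X, if_neg (by simp; omega)]

lemma evb_xv {k : ℕ} (hk : 1 ≤ k) (hkn : k ≤ n) :
    evb n w (xv n k) = C ((w k : ℚ) - 1) * X := by
  rw [xv, dif_pos hkn, evb, MvPolynomial.aeval_X, if_neg (by simp; omega)]

lemma evf_pp {j : ℕ} (hj : j ≤ n) : evf n w (pp n j) = evb n w (bbase n j) := by
  rw [pp, bbase, map_sum, map_sum]
  refine sum_congr rfl fun r hr => ?_
  obtain ⟨hr1, hr2⟩ := mem_Icc.1 hr
  simp only [map_sub, map_mul, map_natCast, map_one, evf_xv w hr1 (hr2.trans hj),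
    evb_xv w hr1 (hr2.trans hj), evf_tv, evb_tv]
  ring

end Evaluation

section Recursions

variable (n : ℕ)

lemma ff_zero_right (i : ℕ) : ff n i 0 = 0 := by
  cases i <;> rfl

lemma ff_self (j : ℕ) : ff n j j = pp n j := by
  cases j with
  | zero => simp [ff, pp]
  | succ j => simp [ff]

lemma ff_succ_succ {i j : ℕ} (h : i ≠ j) :
    ff n (i + 1) (j + 1) = ff n i j + (xv n (j + 1) - xv n (i + 1) - tv n) * ff n i (j + 1) := by
  rw [ff, if_neg (by omega)]

lemma bb_zero_right (k : ℕ) : bb n k 0 = 0 := by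
  rcases k with _ | _ | _ <;> rfl

lemma bb_self (j : ℕ) : bb n j j = bbase n j := by
  rcases j with _ | _ | _ <;> simp [bb, bbase]

lemma bb_eq_zero_of_lt {k j : ℕ} (h : k < j) : bb n k j = 0 := by
  obtain ⟨j, rfl⟩ : ∃ j', j = j' + 1 := ⟨j - 1, by omega⟩
  rcases k with _ | _ | k
  · rfl
  · rw [bb, if_neg (by omega)]
  · rw [bb, if_neg (by omega), if_pos (by omega)]

lemma bb_succ_succ {k j : ℕ} (h : j ≤ k) :
    bb n (k + 2) (j + 1) =
      bb n (k + 1) j + xv n (j + 1) * bb n (k + 1) (j + 1) - (xv n (j + 1) + tv n) * bb n k j := by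
  rw [bb, if_neg (by omega), if_neg (by omega)]

end Recursions

section PowerSeriesLemmas

variable {R : Type*} [CommRing R]

lemma PowerSeries.coeff_mul_eq_zero_of_lt {φ ψ : PowerSeries R} {p q m : ℕ}
    (hφ : ∀ k, p < k → coeff k φ = 0) (hψ : ∀ k, q < k → coeff k ψ = 0)
    (hm : p + q < m) : coeff m (φ * ψ) = 0 := by
  rw [coeff_mul]
  refine sum_eq_zero fun x hx => ?_
  rw [HasAntidiagonal.mem_antidiagonal] at hx
  rcases lt_or_ge p x.1 with h | h
  · rw [hφ _ h, zero_mul]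
  · rw [hψ _ (by omega), mul_zero]

lemma PowerSeries.coeff_succ_one_sub_C_mul_X_mul (r : R) (φ : PowerSeries R) (m : ℕ) :
    coeff (m + 1) ((1 - C r * X) * φ) = coeff (m + 1) φ - r * coeff m φ := by
  rw [sub_mul, one_mul, mul_assoc, map_sub, coeff_C_mul, coeff_succ_X_mul]

end PowerSeriesLemmas

section GeneratingFunctions

local notation "Z" => (PowerSeries.X : PowerSeries ℚ[X])

variable (n : ℕ) (w : ℕ → ℕ)

noncomputable def esymSeries (s : Finset ℕ) : PowerSeries ℚ[X] :=
  ∏ q ∈ s, (1 - PowerSeries.C (C (w q : ℚ) * X) * Z)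

lemma esymSeries_insert {a : ℕ} {s : Finset ℕ} (ha : a ∉ s) :
    esymSeries w (insert a s) =
      (1 - PowerSeries.C (C (w a : ℚ) * X) * Z) * esymSeries w s :=
  prod_insert ha

lemma coeff_esymSeries (s : Finset ℕ) (m : ℕ) :
    PowerSeries.coeff m (esymSeries w s) = C (esym s w m) * (-X) ^ m := by
  induction s using Finset.induction_on generalizing m with
  | empty =>
    cases m with
    | zero => simp [esymSeries, esym_zero]
    | succ m => simp [esymSeries, esym_eq_zero_of_card_lt w (by simp : #(∅ : Finset ℕ) < m + 1)]
  | insert a s ha ih =>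
    rw [esymSeries_insert w ha]
    cases m with
    | zero =>
      rw [sub_mul, one_mul, mul_assoc, map_sub, PowerSeries.coeff_C_mul,
        PowerSeries.coeff_zero_X_mul, mul_zero, sub_zero, ih, esym_zero, esym_zero]
    | succ m =>
      rw [PowerSeries.coeff_succ_one_sub_C_mul_X_mul, ih, ih, esym_insert ha]
      simp only [map_add, map_mul, map_natCast]
      ring

lemma coeff_esymSeries_eq_zero (s : Finset ℕ) {m : ℕ} (h : #s < m) :
    PowerSeries.coeff m (esymSeries w s) = 0 := by
  rw [coeff_esymSeries, esym_eq_zero_of_card_lt w h, map_zero, zero_mul]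

noncomputable def bSeries (j : ℕ) : PowerSeries ℚ[X] :=
  PowerSeries.mk fun k => evb n w (bb n k j)

lemma coeff_bSeries_relation_eq_zero {j m : ℕ} (hjn : j + 1 ≤ n) (hm : j + 1 < m) :
    PowerSeries.coeff m
      ((1 - PowerSeries.C (C ((w (j + 1) : ℚ) - 1) * X) * Z) * bSeries n w (j + 1) -
        Z * ((1 - PowerSeries.C (C (w (j + 1) : ℚ) * X) * Z) * bSeries n w j)) = 0 := by
  obtain ⟨k, rfl⟩ : ∃ k, m = k + 2 := ⟨m - 2, by omega⟩
  rw [map_sub, PowerSeries.coeff_succ_one_sub_C_mul_X_mul, PowerSeries.coeff_succ_X_mul,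
    PowerSeries.coeff_succ_one_sub_C_mul_X_mul]
  simp only [bSeries, PowerSeries.coeff_mk]
  rw [bb_succ_succ n (by omega : j ≤ k)]
  simp only [map_sub, map_add, map_mul, evb_xv w (by omega : 1 ≤ j + 1) hjn, evb_tv, map_one]
  ring

noncomputable def expansion (i j : ℕ) : ℚ[X] :=
  PowerSeries.coeff i (esymSeries w (Icc (j + 1) i) * bSeries n w j)

lemma expansion_eq_sum (i j : ℕ) :
    expansion n w i j =
      ∑ k ∈ Icc j i, (-1 : ℚ[X]) ^ (i - k) * C (esym (Icc (j + 1) i) w (i - k)) *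
        X ^ (i - k) * evb n w (bb n k j) := by
  have hsub : Icc j i ⊆ range (i + 1) := fun k hk => by simp at hk ⊢; omega
  have hvanish (k : ℕ) (hk : k ∈ range (i + 1)) (hkj : k ∉ Icc j i) :
      (-1 : ℚ[X]) ^ (i - k) * C (esym (Icc (j + 1) i) w (i - k)) * X ^ (i - k) *
        evb n w (bb n k j) = 0 := by
    simp only [mem_range, mem_Icc] at hk hkj
    rw [bb_eq_zero_of_lt n (by omega), map_zero, mul_zero]
  rw [sum_subset hsub hvanish, expansion, PowerSeries.coeff_mul, ← Nat.sum_antidiagonal_swap]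
  simp only [Prod.fst_swap, Prod.snd_swap]
  rw [Nat.sum_antidiagonal_eq_sum_range_succ fun k l =>
    PowerSeries.coeff l (esymSeries w (Icc (j + 1) i)) * PowerSeries.coeff k (bSeries n w j)]
  refine sum_congr rfl fun k _ => ?_
  rw [coeff_esymSeries, bSeries, PowerSeries.coeff_mk, neg_pow]
  ring

lemma expansion_zero_right (i : ℕ) : expansion n w i 0 = 0 := by
  simp [expansion_eq_sum, bb_zero_right]

lemma expansion_self (j : ℕ) : expansion n w j j = evb n w (bb n j j) := by
  simp [expansion_eq_sum, esym_zero]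

lemma expansion_succ_succ {i j : ℕ} (hji : j < i) (hin : i + 1 ≤ n) :
    expansion n w (i + 1) (j + 1) = expansion n w i j +
      (C (w (j + 1) : ℚ) - C (w (i + 1) : ℚ) - 1) * X * expansion n w i (j + 1) := by
  set E := esymSeries w (Icc (j + 1 + 1) i)
  have htop : esymSeries w (Icc (j + 1 + 1) (i + 1)) =
      (1 - PowerSeries.C (C (w (i + 1) : ℚ) * X) * Z) * E := by
    rw [← insert_Icc_right_eq_Icc_add_one (by omega), esymSeries_insert w (by simp)]
  have hbot : esymSeries w (Icc (j + 1) i) =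
      (1 - PowerSeries.C (C (w (j + 1) : ℚ) * X) * Z) * E := by
    rw [← insert_Icc_add_one_left_eq_Icc (by omega), esymSeries_insert w (by simp)]
  have hG := PowerSeries.coeff_mul_eq_zero_of_lt (φ := E) (p := i - j - 1) (m := i + 1)
    (fun k hk => coeff_esymSeries_eq_zero w _ (by simp; omega))
    (fun k hk => coeff_bSeries_relation_eq_zero n w (j := j) (by omega) hk) (by omega)
  rw [show ∀ (r s : ℚ[X]) (B₁ B₀ : PowerSeries ℚ[X]),
      E * ((1 - PowerSeries.C r * Z) * B₁ - Z * ((1 - PowerSeries.C s * Z) * B₀)) =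
        (1 - PowerSeries.C r * Z) * (E * B₁) - Z * ((1 - PowerSeries.C s * Z) * E * B₀) from
      fun _ _ _ _ => by ring,
    map_sub, PowerSeries.coeff_succ_one_sub_C_mul_X_mul, PowerSeries.coeff_succ_X_mul] at hG
  rw [expansion, expansion, expansion, htop, hbot, mul_assoc,
    PowerSeries.coeff_succ_one_sub_C_mul_X_mul]
  simp only [map_sub, map_one] at hG
  linear_combination hG

lemma evf_ff_eq_expansion {i j : ℕ} (hji : j ≤ i) (hin : i ≤ n) :
    evf n w (ff n i j) = expansion n w i j := by
  induction i generalizing j with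
  | zero => rw [Nat.le_zero.1 hji, ff_zero_right, map_zero, expansion_zero_right]
  | succ i ih =>
    rcases hji.eq_or_lt with rfl | hlt
    · rw [ff_self, evf_pp w hin, expansion_self, bb_self]
    obtain _ | j := j
    · rw [ff_zero_right, map_zero, expansion_zero_right]
    have hji : j < i := by omega
    rw [ff_succ_succ n hji.ne', map_add, map_mul, map_sub, map_sub,
      evf_xv w (by omega) (by omega), evf_xv w (by omega) hin, evf_tv, ih hji.le (by omega),
      ih hji (by omega), expansion_succ_succ n w hji hin]
    ring

end GeneratingFunctions

theorem stmt7_general (n : ℕ) (w : Equiv.Perm ℕ)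
    (i j : ℕ) (hji : j ≤ i) (hin : i ≤ n) :
    evf n ⇑w (ff n i j) =
      ∑ k ∈ Finset.Icc j i,
        (-1 : Polynomial ℚ) ^ (i - k) *
          Polynomial.C (esym (Finset.Icc (j + 1) i) ⇑w (i - k)) *
          Polynomial.X ^ (i - k) * evb n ⇑w (bb n k j) := by
  rw [evf_ff_eq_expansion n w hji hin, expansion_eq_sum]

/-- For a permutation `w` of `{1,…,n}` (modelled as `w : Equiv.Perm ℕ` fixing every point
outside `{1,…,n}`) and `i ≥ j` in `{1,…,n}`, in `ℚ[t]`: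
`f_{i,j}(w) = Σ_{k=j}^{i} (−1)^{i−k}·e_{i−k}(w(j+1),…,w(i))·t^{i−k}·b_{k,j}((w(1)−1)t,…,(w(j)−1)t,t)`. -/
theorem stmt7 (n : ℕ) (w : Equiv.Perm ℕ) (hw : ∀ r, r ∉ Finset.Icc 1 n → w r = r)
    (i j : ℕ) (hj : 1 ≤ j) (hji : j ≤ i) (hin : i ≤ n) :
    evf n ⇑w (ff n i j) =
      ∑ k ∈ Finset.Icc j i,
        (-1 : Polynomial ℚ) ^ (i - k) *
          Polynomial.C (esym (Finset.Icc (j + 1) i) ⇑w (i - k)) *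
          Polynomial.X ^ (i - k) * evb n ⇑w (bb n k j) :=
  stmt7_general n w i j hji hin
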